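/- If P, Q are convex polytopes with P ∪ Q convex and the same affine hull, and 0 ∉ relint P, 0 ∉ relint Q, but 0 ∈ relint(P ∪ Q), then 0 ∈ relint(P ∩ Q) and dim(P ∪ Q) = dim(P ∩ Q) + 1. -/

import Mathlib

open MeasureTheory Classical

def IsPolytope {n : ℕ} (P : Set (Fin n → ℝ)) : Prop :=
  ∃ S : Finset (Fin n → ℝ), S.Nonempty ∧ P = convexHull ℝ (S : Set (Fin n → ℝ))

noncomputable def pdim {n : ℕ} (P : Set (Fin n → ℝ)) : ℕ :=
  Module.finrank ℝ (affineSpan ℝ P).direction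

/-!
Since `P ∪ Q` is a relative neighbourhood of `0` and `Q` is closed, `0 ∉ relint P` forces `0 ∈ P`,
so the common affine span is a linear subspace `K`. As `0` is a relative boundary point of `P` and
of `Q`, there are linear functionals `f ≤ 0` on `P` and `g ≤ 0` on `Q`, both nonzero on `K`. No
vector of `K` has `f > 0` and `g > 0` (a small multiple of it would lie in `P ∪ Q`), which forces
`g = c • f` on `K` with `c < 0`. Near `0` in `K` the half-space `f ≤ 0` then lies in `P` and the
half-space `f ≥ 0` in `Q` (by closedness of `P` and `Q`), so `P ∩ Q` is a neighbourhood of `0`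
in the hyperplane `K ∩ ker f` of `K`, and this hyperplane is its affine span.
-/

open Set Filter Topology Module

theorem mem_intrinsicInterior_iff_mem_nhdsWithin {𝕜 V P : Type*} [Ring 𝕜] [AddCommGroup V]
    [Module 𝕜 V] [TopologicalSpace P] [AddTorsor V P] {s : Set P} {x : P} :
    x ∈ intrinsicInterior 𝕜 s ↔ x ∈ affineSpan 𝕜 s ∧ s ∈ 𝓝[affineSpan 𝕜 s] x := by
  simp only [mem_intrinsicInterior, mem_interior_iff_mem_nhds]
  constructor
  · rintro ⟨y, hy, rfl⟩
    exact ⟨y.2, preimage_coe_mem_nhds_subtype.1 hy⟩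
  · exact fun ⟨hx, hs⟩ => ⟨⟨x, hx⟩, preimage_coe_mem_nhds_subtype.2 hs, rfl⟩

theorem mem_of_mem_intrinsicInterior_union {𝕜 V P : Type*} [Ring 𝕜] [AddCommGroup V]
    [Module 𝕜 V] [TopologicalSpace P] [AddTorsor V P] {s t : Set P} {x : P}
    (hx : x ∈ intrinsicInterior 𝕜 (s ∪ t)) (hst : affineSpan 𝕜 (s ∪ t) = affineSpan 𝕜 s)
    (ht : IsClosed t) (hxs : x ∉ intrinsicInterior 𝕜 s) : x ∈ t := by
  by_contra hxt
  rw [mem_intrinsicInterior_iff_mem_nhdsWithin, hst] at hx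
  refine hxs (mem_intrinsicInterior_iff_mem_nhdsWithin.2 ⟨hx.1, ?_⟩)
  filter_upwards [hx.2, mem_nhdsWithin_of_mem_nhds (ht.isOpen_compl.mem_nhds hxt)]
  rintro y (hy | hy) hyt
  exacts [hy, absurd hy hyt]

theorem LinearMap.exists_nonpos_smul_eq_of_pos_imp_nonpos {𝕜 V : Type*} [Field 𝕜]
    [LinearOrder 𝕜] [IsStrictOrderedRing 𝕜] [AddCommGroup V] [Module 𝕜 V] {f g : V →ₗ[𝕜] 𝕜}
    (hf : f ≠ 0) (hfg : ∀ v, 0 < f v → g v ≤ 0) : ∃ c : 𝕜, c ≤ 0 ∧ g = c • f := by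
  obtain ⟨z, hz⟩ := LinearMap.surjective_of_ne_zero hf 1
  have hker : ∀ v, f v = 0 → g v ≤ 0 := by
    intro v hfv
    by_contra! hgv
    -- `v + t • z` has `f = t > 0`, and for this `t` still `g > 0`
    set t := g v / (|g z| + 1)
    have ht : 0 < t := by positivity
    have htg : t * (|g z| + 1) = g v := div_mul_cancel₀ _ (by positivity)
    have := hfg (v + t • z) (by simp [hfv, hz, ht])
    simp only [map_add, map_smul, smul_eq_mul] at this
    nlinarith [neg_abs_le (g z)]
  refine ⟨g z, hfg z (by simp [hz]), LinearMap.ext fun v => ?_⟩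
  have hw : f (v - f v • z) = 0 := by simp [hz]
  have h₁ := hker _ hw
  have h₂ := hker _ (by rw [map_neg, hw, neg_zero] : f (-(v - f v • z)) = 0)
  simp only [map_neg, map_sub, map_smul, smul_eq_mul] at h₁ h₂
  rw [LinearMap.smul_apply, smul_eq_mul]
  linarith

theorem Submodule.finrank_inf_ker_add_one {𝕜 V : Type*} [Field 𝕜] [AddCommGroup V] [Module 𝕜 V]
    {K : Submodule 𝕜 V} [FiniteDimensional 𝕜 K] {f : V →ₗ[𝕜] 𝕜} {z : V} (hz : z ∈ K)
    (hfz : f z ≠ 0) : finrank 𝕜 ↥(K ⊓ LinearMap.ker f) + 1 = finrank 𝕜 K := by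
  have hf : f ∘ₗ K.subtype ≠ 0 := fun h => hfz (LinearMap.congr_fun h ⟨z, hz⟩)
  rw [← Module.Dual.finrank_ker_add_one_of_ne_zero hf, LinearMap.ker_comp,
    ← Submodule.map_comap_subtype, Submodule.finrank_map_subtype_eq]

theorem inter_subset_inf_ker {E : Type*} [AddCommGroup E] [Module ℝ E] {P Q : Set E}
    {K : Submodule ℝ E} {f g : E →ₗ[ℝ] ℝ} {c : ℝ} (hPK : P ⊆ K) (hfP : ∀ x ∈ P, f x ≤ 0)
    (hgQ : ∀ x ∈ Q, g x ≤ 0) (hc : c < 0) (hgf : ∀ v ∈ K, g v = c * f v) :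
    P ∩ Q ⊆ (K ⊓ LinearMap.ker f : Submodule ℝ E) := by
  rintro x ⟨hxP, hxQ⟩
  have hgx := hgQ x hxQ
  rw [hgf x (hPK hxP)] at hgx
  exact Submodule.mem_inf.2
    ⟨hPK hxP, LinearMap.mem_ker.2 (le_antisymm (hfP x hxP) (by nlinarith))⟩

section TopologicalVectorSpace

variable {E : Type*} [AddCommGroup E] [Module ℝ E] [TopologicalSpace E] [ContinuousSMul ℝ E]

theorem exists_pos_smul_mem_of_mem_nhdsWithin {s : Set E} {M : Submodule ℝ E}
    (hs : s ∈ 𝓝[M] 0) {v : E} (hv : v ∈ M) : ∃ t : ℝ, 0 < t ∧ t • v ∈ s := by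
  have hlim : Tendsto (fun t : ℝ => t • v) (𝓝[>] 0) (𝓝[M] 0) := by
    refine tendsto_nhdsWithin_iff.2 ⟨?_, Eventually.of_forall fun t => M.smul_mem t hv⟩
    exact ((continuous_id.smul continuous_const).tendsto' 0 0 (zero_smul ℝ v)).mono_left
      nhdsWithin_le_nhds
  exact (eventually_mem_nhdsWithin.and (hlim.eventually hs)).exists

theorem affineSpan_eq_toAffineSubspace_of_mem_nhdsWithin {s : Set E} {M : Submodule ℝ E}
    (hsM : s ⊆ M) (hs : s ∈ 𝓝[M] 0) : affineSpan ℝ s = M.toAffineSubspace := by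
  refine le_antisymm (affineSpan_le.2 hsM) fun v hv => ?_
  obtain ⟨t, ht, hts⟩ := exists_pos_smul_mem_of_mem_nhdsWithin hs hv
  have h0 : (0 : E) ∈ affineSpan ℝ s :=
    subset_affineSpan ℝ s (mem_of_mem_nhdsWithin M.zero_mem hs)
  have := AffineSubspace.smul_vsub_vadd_mem _ t⁻¹ (subset_affineSpan ℝ s hts) h0 h0
  simpa [smul_smul, inv_mul_cancel₀ ht.ne'] using this

theorem nonpos_of_pos_of_union_mem_nhdsWithin {P Q : Set E} {M : Submodule ℝ E}
    {f g : E →ₗ[ℝ] ℝ} (hPQ : P ∪ Q ∈ 𝓝[M] 0) (hfP : ∀ x ∈ P, f x ≤ 0) (hgQ : ∀ x ∈ Q, g x ≤ 0)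
    {v : E} (hv : v ∈ M) (hfv : 0 < f v) : g v ≤ 0 := by
  obtain ⟨t, ht, htv | htv⟩ := exists_pos_smul_mem_of_mem_nhdsWithin hPQ hv
  · have := hfP _ htv
    rw [map_smul, smul_eq_mul] at this
    nlinarith
  · have := hgQ _ htv
    rw [map_smul, smul_eq_mul] at this
    nlinarith

theorem exists_neg_mul_eq_of_union_mem_nhdsWithin {P Q : Set E} {K : Submodule ℝ E}
    {f g : E →ₗ[ℝ] ℝ} (hPQ : P ∪ Q ∈ 𝓝[K] 0) (hfP : ∀ x ∈ P, f x ≤ 0) (hgQ : ∀ x ∈ Q, g x ≤ 0)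
    {z w : E} (hz : z ∈ K) (hfz : f z ≠ 0) (hw : w ∈ K) (hgw : g w ≠ 0) :
    ∃ c : ℝ, c < 0 ∧ ∀ v ∈ K, g v = c * f v := by
  obtain ⟨c, hc, hgf⟩ := LinearMap.exists_nonpos_smul_eq_of_pos_imp_nonpos
    (𝕜 := ℝ) (f := f ∘ₗ K.subtype) (g := g ∘ₗ K.subtype)
    (fun h => hfz (LinearMap.congr_fun h ⟨z, hz⟩))
    (fun v hv => nonpos_of_pos_of_union_mem_nhdsWithin hPQ hfP hgQ v.2 hv)
  have hgf' : ∀ v ∈ K, g v = c * f v := fun v hv => LinearMap.congr_fun hgf ⟨v, hv⟩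
  exact ⟨c, hc.lt_of_ne (by rintro rfl; simp [hgf' w hw] at hgw), hgf'⟩

theorem mem_of_union_mem_nhdsWithin [ContinuousAdd E] {P Q : Set E} {M : Submodule ℝ E}
    {f g : E →ₗ[ℝ] ℝ} (hP : IsClosed P) (hgQ : ∀ x ∈ Q, g x ≤ 0)
    (hfg : ∀ v ∈ M, f v < 0 → 0 < g v) {z : E} (hz : z ∈ M) (hfz : f z < 0) {x : E}
    (hx : x ∈ M) (hPQ : P ∪ Q ∈ 𝓝[M] x) (hfx : f x ≤ 0) : x ∈ P := by
  have hmem : ∀ t : ℝ, x + t • z ∈ M := fun t => M.add_mem hx (M.smul_mem t hz)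
  have hlim : Tendsto (fun t : ℝ => x + t • z) (𝓝[>] 0) (𝓝[M] x) := by
    refine tendsto_nhdsWithin_iff.2 ⟨?_, Eventually.of_forall hmem⟩
    refine ((continuous_const.add (continuous_id.smul continuous_const)).tendsto' 0 x
      (by simp)).mono_left nhdsWithin_le_nhds
  refine hP.mem_of_tendsto (tendsto_nhdsWithin_iff.1 hlim).1 ?_
  filter_upwards [eventually_mem_nhdsWithin, hlim.eventually hPQ] with t ht hPQt
  have hft : f (x + t • z) < 0 := by
    rw [map_add, map_smul, smul_eq_mul]
    nlinarith [mem_Ioi.1 ht]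
  exact hPQt.resolve_right fun hQ => (hgQ _ hQ).not_gt (hfg _ (hmem t) hft)

theorem inter_mem_nhdsWithin_inf_ker [ContinuousAdd E] {P Q : Set E} {K : Submodule ℝ E}
    {f g : E →ₗ[ℝ] ℝ} {c : ℝ} (hP : IsClosed P) (hQ : IsClosed Q) (hPQ : P ∪ Q ∈ 𝓝[K] 0)
    (hfP : ∀ x ∈ P, f x ≤ 0) (hgQ : ∀ x ∈ Q, g x ≤ 0) (hc : c < 0)
    (hgf : ∀ v ∈ K, g v = c * f v) {z : E} (hz : z ∈ K) (hfz : f z < 0) :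
    P ∩ Q ∈ 𝓝[(K ⊓ LinearMap.ker f : Submodule ℝ E)] 0 := by
  have hnear : ∀ᶠ x in 𝓝[(K ⊓ LinearMap.ker f : Submodule ℝ E)] 0, P ∪ Q ∈ 𝓝[K] x :=
    nhdsWithin_mono _ (fun x hx => (Submodule.mem_inf.1 hx).1)
      (eventually_eventually_nhdsWithin.2 hPQ)
  filter_upwards [eventually_mem_nhdsWithin, hnear] with x hx hxPQ
  obtain ⟨hxK, hfx⟩ := Submodule.mem_inf.1 hx
  rw [LinearMap.mem_ker] at hfx
  refine ⟨mem_of_union_mem_nhdsWithin hP hgQ (fun v hv hfv => ?_) hz hfz hxK hxPQ hfx.le,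
    mem_of_union_mem_nhdsWithin hQ hfP (fun v hv hgv => ?_) (K.neg_mem hz) ?_ hxK
      (union_comm P Q ▸ hxPQ) (by rw [hgf x hxK, hfx, mul_zero])⟩
  · rw [hgf v hv]; nlinarith
  · rw [hgf v hv] at hgv; nlinarith
  · rw [hgf _ (K.neg_mem hz), map_neg]; nlinarith

end TopologicalVectorSpace

theorem exists_nonpos_of_zero_notMem_intrinsicInterior {E : Type*} [NormedAddCommGroup E]
    [NormedSpace ℝ E] [FiniteDimensional ℝ E] {C : Set E} {K : Submodule ℝ E}
    (hC : Convex ℝ C) (hK : affineSpan ℝ C = K.toAffineSubspace)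
    (h0 : (0 : E) ∉ intrinsicInterior ℝ C) :
    ∃ f : E →ₗ[ℝ] ℝ, (∀ x ∈ C, f x ≤ 0) ∧ ∃ z ∈ K, f z < 0 := by
  have hCK : C ⊆ K := fun x hx => by simpa [hK] using subset_affineSpan ℝ C hx
  set S : Set K := (↑) ⁻¹' C
  have hS : Convex ℝ S := hC.linear_preimage K.subtype
  have hrel : ∀ y : K, (y : E) ∈ intrinsicInterior ℝ C ↔ y ∈ interior S := by
    intro y
    rw [mem_intrinsicInterior_iff_mem_nhdsWithin, hK, mem_interior_iff_mem_nhds]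
    exact ⟨fun h => preimage_coe_mem_nhds_subtype.2 h.2,
      fun h => ⟨y.2, preimage_coe_mem_nhds_subtype.1 h⟩⟩
  have hCne : C.Nonempty := (affineSpan_nonempty ℝ).1 (hK ▸ ⟨0, K.zero_mem⟩)
  obtain ⟨x, hx⟩ := hCne.intrinsicInterior hC
  have hxK : x ∈ K := hCK (intrinsicInterior_subset hx)
  have hxS : (⟨x, hxK⟩ : K) ∈ interior S := (hrel _).1 hx
  obtain ⟨φ, hφ⟩ := geometric_hahn_banach_open_point hS.interior isOpen_interior
    fun h => h0 ((hrel 0).2 h)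
  have hφS : ∀ y ∈ S, φ y ≤ 0 := by
    have : closure (interior S) ⊆ {y | φ y ≤ 0} :=
      closure_minimal (fun y hy => by simpa using (hφ y hy).le)
        (isClosed_le φ.continuous continuous_const)
    rw [hS.closure_interior_eq_closure_of_nonempty_interior ⟨_, hxS⟩] at this
    exact fun y hy => this (subset_closure hy)
  obtain ⟨f, hf⟩ := LinearMap.exists_extend (φ : K →ₗ[ℝ] ℝ)
  have hfφ : ∀ y : K, f y = φ y := fun y => LinearMap.congr_fun hf y
  exact ⟨f, fun y hy => (hfφ ⟨y, hCK hy⟩).trans_le (hφS _ hy), x, hxK,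
    (hfφ ⟨x, hxK⟩).trans_lt (by simpa using hφ _ hxS)⟩

theorem IsPolytope.isClosed {n : ℕ} {P : Set (Fin n → ℝ)} (hP : IsPolytope P) : IsClosed P := by
  obtain ⟨S, -, rfl⟩ := hP
  exact S.finite_toSet.isClosed_convexHull (𝕜 := ℝ)

theorem IsPolytope.convex {n : ℕ} {P : Set (Fin n → ℝ)} (hP : IsPolytope P) : Convex ℝ P := by
  obtain ⟨S, -, rfl⟩ := hP
  exact convex_convexHull ℝ _

theorem relint_union_case_general (n : ℕ) (P Q : Set (Fin n → ℝ))
    (hP : IsPolytope P) (hQ : IsPolytope Q)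
    (haff : affineSpan ℝ P = affineSpan ℝ Q)
    (h0P : (0 : Fin n → ℝ) ∉ intrinsicInterior ℝ P)
    (h0Q : (0 : Fin n → ℝ) ∉ intrinsicInterior ℝ Q)
    (h0U : (0 : Fin n → ℝ) ∈ intrinsicInterior ℝ (P ∪ Q)) :
    (0 : Fin n → ℝ) ∈ intrinsicInterior ℝ (P ∩ Q) ∧
      pdim (P ∪ Q) = pdim (P ∩ Q) + 1 := by
  have hspan : affineSpan ℝ (P ∪ Q) = affineSpan ℝ P := by
    rw [AffineSubspace.span_union, haff, sup_idem]
  have hP0 : (0 : Fin n → ℝ) ∈ P := mem_of_mem_intrinsicInterior_union (union_comm P Q ▸ h0U)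
    (by rw [union_comm, hspan, haff]) hP.isClosed h0Q
  set K := (affineSpan ℝ P).direction
  have hKP : affineSpan ℝ P = K.toAffineSubspace :=
    (AffineSubspace.direction_eq_self_iff_zero_mem.2 (subset_affineSpan ℝ P hP0)).symm
  have hU : P ∪ Q ∈ 𝓝[K] 0 := by
    have := (mem_intrinsicInterior_iff_mem_nhdsWithin.1 h0U).2
    rwa [hspan, hKP] at this
  obtain ⟨f, hfP, z, hz, hfz⟩ := exists_nonpos_of_zero_notMem_intrinsicInterior hP.convex hKP h0P
  obtain ⟨g, hgQ, w, hw, hgw⟩ :=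
    exists_nonpos_of_zero_notMem_intrinsicInterior hQ.convex (haff ▸ hKP) h0Q
  obtain ⟨c, hc, hgf⟩ := exists_neg_mul_eq_of_union_mem_nhdsWithin hU hfP hgQ hz hfz.ne hw hgw.ne
  have hPK : P ⊆ K := fun x hx => by simpa [hKP] using subset_affineSpan ℝ P hx
  have hnhds := inter_mem_nhdsWithin_inf_ker hP.isClosed hQ.isClosed hU hfP hgQ hc hgf hz hfz
  have hspan' := affineSpan_eq_toAffineSubspace_of_mem_nhdsWithin
    (inter_subset_inf_ker hPK hfP hgQ hc hgf) hnhds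
  refine ⟨?_, ?_⟩
  · rw [mem_intrinsicInterior_iff_mem_nhdsWithin, hspan']
    exact ⟨(K ⊓ LinearMap.ker f).zero_mem, hnhds⟩
  · rw [pdim, pdim, hspan, hKP, hspan', Submodule.toAffineSubspace_direction,
      Submodule.toAffineSubspace_direction, Submodule.finrank_inf_ker_add_one hz hfz.ne]

theorem relint_union_case (n : ℕ) (P Q : Set (Fin n → ℝ))
    (hP : IsPolytope P) (hQ : IsPolytope Q) (hPQ : Convex ℝ (P ∪ Q))
    (haff : affineSpan ℝ P = affineSpan ℝ Q)
    (h0P : (0 : Fin n → ℝ) ∉ intrinsicInterior ℝ P)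
    (h0Q : (0 : Fin n → ℝ) ∉ intrinsicInterior ℝ Q)
    (h0U : (0 : Fin n → ℝ) ∈ intrinsicInterior ℝ (P ∪ Q)) :
    (0 : Fin n → ℝ) ∈ intrinsicInterior ℝ (P ∩ Q) ∧
      pdim (P ∪ Q) = pdim (P ∩ Q) + 1 :=
  relint_union_case_general n P Q hP hQ haff h0P h0Q h0U
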